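/- arXiv:2306.10784 — 2 statements merged into one kernel-verified Lean document; each statement's English description precedes it below -/
import Mathlib

section
/- If D is a 4-Ore digraph different from the bidirected K4, and T is a copy of the bidirected K3 in D, then D contains either an Ore-collapsible induced subdigraph disjoint from T or an emerald disjoint from T. -/
/-- A (finite) digraph on vertices drawn from `ℕ`. -/
structure Dgr where
  verts : Finset ℕ
  Adj : ℕ → ℕ → Prop
  adj_mem : ∀ ⦃u v : ℕ⦄, Adj u v → u ∈ verts ∧ v ∈ verts
  adj_irrefl : ∀ v, ¬ Adj v v

namespace Dgr

/-- number of vertices -/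
def nV (D : Dgr) : ℕ := D.verts.card

/-- number of arcs -/
noncomputable def nA (D : Dgr) : ℕ := {p : ℕ × ℕ | D.Adj p.1 p.2}.ncard

/-- subdigraph relation -/
def Subd (H D : Dgr) : Prop := H.verts ⊆ D.verts ∧ ∀ ⦃u v : ℕ⦄, H.Adj u v → D.Adj u v

def ProperSubd (H D : Dgr) : Prop := Subd H D ∧ ¬ Subd D H

/-- a relation is acyclic: no directed cycle through any vertex -/
def Acy (R : ℕ → ℕ → Prop) : Prop := ∀ v, ¬ Relation.TransGen R v v

/-- a `k`-dicolouring: each colour class induces an acyclic subdigraph -/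
def IsDicol (D : Dgr) {k : ℕ} (φ : ℕ → Fin k) : Prop :=
  Acy (fun u v => D.Adj u v ∧ φ u = φ v)

def Dicolourable (D : Dgr) (k : ℕ) : Prop := ∃ φ : ℕ → Fin k, D.IsDicol φ

/-- the dichromatic number -/
noncomputable def dichr (D : Dgr) : ℕ := sInf {k | D.Dicolourable k}

/-- `k`-dicritical digraphs -/
def Dicritical (k : ℕ) (D : Dgr) : Prop :=
  D.dichr = k ∧ ∀ H : Dgr, ProperSubd H D → H.dichr < k

def Bidirected (D : Dgr) : Prop := ∀ ⦃u v : ℕ⦄, D.Adj u v → D.Adj v u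

def Oriented (D : Dgr) : Prop := ∀ ⦃u v : ℕ⦄, D.Adj u v → ¬ D.Adj v u

/-- being a bidirected complete digraph on `n` vertices -/
def IsBidirComplete (n : ℕ) (D : Dgr) : Prop :=
  D.verts.card = n ∧ ∀ u ∈ D.verts, ∀ v ∈ D.verts, u ≠ v → D.Adj u v

/-- a packing of digons (2-sets) and bidirected triangles (3-sets) -/
def IsPacking (D : Dgr) (P : Finset (Finset ℕ)) : Prop :=
  (∀ s ∈ P, (s.card = 2 ∨ s.card = 3) ∧ s ⊆ D.verts ∧
      ∀ u ∈ s, ∀ v ∈ s, u ≠ v → D.Adj u v) ∧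
  (P : Set (Finset ℕ)).Pairwise Disjoint

/-- `T(D)`: the maximum of `d + 2t` over packings of `d` digons and `t` bidirected
triangles; a digon contributes `card - 1 = 1`, a triangle `card - 1 = 2`. -/
noncomputable def TT (D : Dgr) : ℕ :=
  sSup {t | ∃ P : Finset (Finset ℕ), D.IsPacking P ∧ t = ∑ s ∈ P, (s.card - 1)}

/-- vertex deletion -/
def del (D : Dgr) (x : ℕ) : Dgr where
  verts := D.verts.erase x
  Adj u v := D.Adj u v ∧ u ≠ x ∧ v ≠ x
  adj_mem := by
    intro u v h
    exact ⟨Finset.mem_erase.2 ⟨h.2.1, (D.adj_mem h.1).1⟩,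
           Finset.mem_erase.2 ⟨h.2.2, (D.adj_mem h.1).2⟩⟩
  adj_irrefl := fun v h => D.adj_irrefl v h.1

/-- induced subdigraph on a set `S` of vertices -/
def induce (D : Dgr) (S : Finset ℕ) : Dgr where
  verts := D.verts ∩ S
  Adj u v := D.Adj u v ∧ u ∈ S ∧ v ∈ S
  adj_mem := by
    intro u v h
    exact ⟨Finset.mem_inter.2 ⟨(D.adj_mem h.1).1, h.2.1⟩,
           Finset.mem_inter.2 ⟨(D.adj_mem h.1).2, h.2.2⟩⟩
  adj_irrefl := fun v h => D.adj_irrefl v h.1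

/-- adding a digon between two (distinct, existing) vertices -/
def addDigon (D : Dgr) (x y : ℕ) : Dgr where
  verts := D.verts
  Adj u v := D.Adj u v ∨
    (x ≠ y ∧ x ∈ D.verts ∧ y ∈ D.verts ∧ ((u = x ∧ v = y) ∨ (u = y ∧ v = x)))
  adj_mem := by
    intro u v h
    rcases h with h | ⟨_, hx, hy, h | h⟩
    · exact D.adj_mem h
    · exact ⟨h.1 ▸ hx, h.2 ▸ hy⟩
    · exact ⟨h.1 ▸ hy, h.2 ▸ hx⟩
  adj_irrefl := by
    intro v h
    rcases h with h | ⟨hxy, _, _, h | h⟩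
    · exact D.adj_irrefl v h
    · exact hxy (h.1.symm.trans h.2)
    · exact hxy (h.2.symm.trans h.1)

/-- removing the digon `[x,y]` (both arcs) -/
def delDigon (D : Dgr) (x y : ℕ) : Dgr where
  verts := D.verts
  Adj u v := D.Adj u v ∧ ¬(u = x ∧ v = y) ∧ ¬(u = y ∧ v = x)
  adj_mem := by intro u v h; exact D.adj_mem h.1
  adj_irrefl := fun v h => D.adj_irrefl v h.1

/-- `D` is an Ore-composition of `D1` (digon side, replaced digon `[x,y]`) and
`D2` (split side, split vertex `z`). -/
def IsOreComp (D1 D2 D : Dgr) : Prop :=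
  Bidirected D1 ∧ Bidirected D2 ∧ Disjoint D1.verts D2.verts ∧
  ∃ (x y z : ℕ) (Z1 Z2 : Set ℕ),
    x ∈ D1.verts ∧ y ∈ D1.verts ∧ x ≠ y ∧ D1.Adj x y ∧
    z ∈ D2.verts ∧
    Z1 ∪ Z2 = {w | D2.Adj z w} ∧ Disjoint Z1 Z2 ∧ Z1.Nonempty ∧ Z2.Nonempty ∧
    D.verts = D1.verts ∪ D2.verts.erase z ∧
    (∀ u v, D.Adj u v ↔
      (D1.Adj u v ∧ ¬(u = x ∧ v = y) ∧ ¬(u = y ∧ v = x)) ∨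
      (D2.Adj u v ∧ u ≠ z ∧ v ≠ z) ∨
      (u = x ∧ v ∈ Z1 ∧ D2.Adj z v) ∨ (v = x ∧ u ∈ Z1 ∧ D2.Adj u z) ∨
      (u = y ∧ v ∈ Z2 ∧ D2.Adj z v) ∨ (v = y ∧ u ∈ Z2 ∧ D2.Adj u z))

/-- degree of a vertex: in-degree plus out-degree -/
noncomputable def deg (D : Dgr) (v : ℕ) : ℕ :=
  {u | D.Adj v u}.ncard + {u | D.Adj u v}.ncard

end Dgr

open Dgr

/-- the class of 4-Ore digraphs -/
inductive IsOre4 : Dgr → Prop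
  | k4 : ∀ D : Dgr, IsBidirComplete 4 D → IsOre4 D
  | comp : ∀ D1 D2 D : Dgr, IsOre4 D1 → IsOre4 D2 → IsOreComp D1 D2 D → IsOre4 D

namespace Dgr

/-- an emerald: a bidirected triangle all of whose vertices have degree 6 in `D` -/
def IsEmerald (D : Dgr) (s : Finset ℕ) : Prop :=
  s.card = 3 ∧ s ⊆ D.verts ∧ (∀ u ∈ s, ∀ v ∈ s, u ≠ v → D.Adj u v) ∧
  ∀ v ∈ s, D.deg v = 6

/-- a diamond: a bidirected `K4` minus a digon `[x,y]`, the two other vertices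
having degree 6 in `D` -/
def IsDiamond (D : Dgr) (s : Finset ℕ) : Prop :=
  s.card = 4 ∧ s ⊆ D.verts ∧ ∃ x ∈ s, ∃ y ∈ s, x ≠ y ∧
    (∀ u ∈ s, ∀ v ∈ s, u ≠ v → ¬(u = x ∧ v = y) → ¬(u = y ∧ v = x) → D.Adj u v) ∧
    (∀ v ∈ s, v ≠ x → v ≠ y → D.deg v = 6)

/-- boundary of an induced subdigraph given by its vertex set `S` -/
def bdry (D : Dgr) (S : Finset ℕ) : Set ℕ :=
  {v | v ∈ S ∧ ∃ u ∈ D.verts, u ∉ S ∧ (D.Adj u v ∨ D.Adj v u)}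

/-- Ore-collapsible induced subdigraph, given by its vertex set -/
def OreCollapsible (D : Dgr) (S : Finset ℕ) : Prop :=
  S ⊆ D.verts ∧ S.card < D.verts.card ∧
  ∃ u v : ℕ, u ≠ v ∧ D.bdry S = {u, v} ∧ IsOre4 ((D.induce S).addDigon u v)

/-- the potential of a digraph, with respect to parameters ε and δ -/
noncomputable def pot (D : Dgr) (ε δ : ℝ) : ℝ :=
  (10/3 + ε) * (D.nV : ℝ) - (D.nA : ℝ) - δ * (D.TT : ℝ)

end Dgr

/-!
Induct along the Ore composition: `D` is obtained from `D1` by deleting the digon `[x,y]` and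
from `D2` by splitting `z` into `x`, joined to `Z1`, and `y`, joined to `Z2`. Emeralds and
Ore-collapsible sets of `D2` avoiding `z` survive in `D`, as do those of `D1` avoiding `x` when
`|Z2| = 1` (then `y` keeps its degree); by the same induction, every 4-Ore digraph has such a
configuration avoiding any prescribed vertex. If `t` misses `D1`, then `D1` itself is
Ore-collapsible in `D`; if `t ⊆ D1`, take a configuration of `D2` avoiding `z`. Otherwise, as `x`
and `y` are not adjacent in `D`, up to symmetry `t` is `x` with two vertices of `Z1`, so
`(t \ {x}) ∪ {z}` is a triangle of `D2` and induction applies, unless `D2` is the bidirected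
`K4`: then `|Z1| ≥ 2` forces `|Z2| = 1`, and a configuration of `D1` avoiding `x` survives.
-/

namespace Dgr

theorem ext {A B : Dgr} (hv : A.verts = B.verts) (ha : A.Adj = B.Adj) : A = B := by
  cases A; cases B; cases hv; cases ha; rfl

theorem outNbhd_finite (D : Dgr) (v : ℕ) : {u | D.Adj v u}.Finite :=
  D.verts.finite_toSet.subset fun _ hu => (D.adj_mem hu).2

theorem deg_eq_two_mul {D : Dgr} (hD : Bidirected D) (v : ℕ) :
    D.deg v = 2 * {u | D.Adj v u}.ncard := by
  have hin : {u | D.Adj u v} = {u | D.Adj v u} := Set.ext fun _ => ⟨(hD ·), (hD ·)⟩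
  rw [deg, hin, two_mul]

theorem bdry_eq_of_bidirected {D : Dgr} (hD : Bidirected D) (S : Finset ℕ) :
    D.bdry S = {v | v ∈ S ∧ ∃ u, u ∉ S ∧ D.Adj v u} := by
  ext v
  constructor
  · rintro ⟨hv, u, -, hu, huv | hvu⟩
    exacts [⟨hv, u, hu, hD huv⟩, ⟨hv, u, hu, hvu⟩]
  · rintro ⟨hv, u, hu, hvu⟩
    exact ⟨hv, u, (D.adj_mem hvu).2, hu, Or.inr hvu⟩

theorem induce_eq_induce {D D' : Dgr} {S : Finset ℕ} (hS : S ⊆ D.verts) (hS' : S ⊆ D'.verts)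
    (hadj : ∀ u ∈ S, ∀ v ∈ S, D.Adj u v ↔ D'.Adj u v) : D.induce S = D'.induce S := by
  refine Dgr.ext ?_ ?_
  · change D.verts ∩ S = D'.verts ∩ S
    rw [Finset.inter_eq_right.2 hS, Finset.inter_eq_right.2 hS']
  · funext u v
    exact propext ⟨fun ⟨a, hu, hv⟩ => ⟨(hadj u hu v hv).1 a, hu, hv⟩,
      fun ⟨a, hu, hv⟩ => ⟨(hadj u hu v hv).2 a, hu, hv⟩⟩

theorem OreCollapsible.of_induce_eq {D D' : Dgr} {S : Finset ℕ} (hS : D'.OreCollapsible S)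
    (hSD : S ⊆ D.verts) (hcard : S.card < D.verts.card) (hind : D.induce S = D'.induce S)
    (hbdry : D.bdry S = D'.bdry S) : D.OreCollapsible S := by
  obtain ⟨-, -, u, v, huv, hbd, hore⟩ := hS
  exact ⟨hSD, hcard, u, v, huv, hbdry.trans hbd, hind ▸ hore⟩

namespace IsBidirComplete

variable {E : Dgr} (hE : IsBidirComplete 4 E)
include hE

theorem outNbhd_eq {v : ℕ} (hv : v ∈ E.verts) : {u | E.Adj v u} = ↑(E.verts.erase v) := by
  ext u
  simp only [Set.mem_ofPred_eq, Finset.coe_erase, Set.mem_sdiff, Finset.mem_coe,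
    Set.mem_singleton_iff]
  exact ⟨fun ha => ⟨(E.adj_mem ha).2, fun e => E.adj_irrefl v (e ▸ ha)⟩,
    fun ⟨hu, hne⟩ => hE.2 v hv u hu (Ne.symm hne)⟩

theorem ncard_outNbhd {v : ℕ} (hv : v ∈ E.verts) : {u | E.Adj v u}.ncard = 3 := by
  rw [hE.outNbhd_eq hv, Set.ncard_coe_finset, Finset.card_erase_of_mem hv, hE.1]

theorem bidirected : Bidirected E := fun u v a =>
  hE.2 v (E.adj_mem a).2 u (E.adj_mem a).1 fun e => E.adj_irrefl u (e ▸ a)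

theorem isEmerald_erase {v : ℕ} (hv : v ∈ E.verts) : E.IsEmerald (E.verts.erase v) := by
  refine ⟨by rw [Finset.card_erase_of_mem hv, hE.1], Finset.erase_subset _ _,
    fun a ha b hb => hE.2 a (Finset.mem_of_mem_erase ha) b (Finset.mem_of_mem_erase hb),
    fun a ha => ?_⟩
  rw [deg_eq_two_mul hE.bidirected, hE.ncard_outNbhd (Finset.mem_of_mem_erase ha)]

end IsBidirComplete

def IsTriangle (D : Dgr) (t : Finset ℕ) : Prop :=
  t.card = 3 ∧ t ⊆ D.verts ∧ ∀ u ∈ t, ∀ v ∈ t, u ≠ v → D.Adj u v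

def HasCollapsibleOrEmeraldOff (D : Dgr) (A : Finset ℕ) : Prop :=
  (∃ S, D.OreCollapsible S ∧ Disjoint S A) ∨ (∃ s, D.IsEmerald s ∧ Disjoint s A)

theorem HasCollapsibleOrEmeraldOff.of_inter_verts_subset {D : Dgr} {A B : Finset ℕ}
    (hB : D.HasCollapsibleOrEmeraldOff B) (hAB : A ∩ D.verts ⊆ B) :
    D.HasCollapsibleOrEmeraldOff A := by
  have key : ∀ S ⊆ D.verts, Disjoint S B → Disjoint S A := fun S hS hSB =>
    Finset.disjoint_left.2 fun a haS haA =>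
      Finset.disjoint_left.1 hSB haS (hAB (Finset.mem_inter.2 ⟨haA, hS haS⟩))
  rcases hB with ⟨S, hS, hSB⟩ | ⟨s, hs, hsB⟩
  exacts [Or.inl ⟨S, hS, key S hS.1 hSB⟩, Or.inr ⟨s, hs, key s hs.2.1 hsB⟩]

/-- `IsOreComp D1 D2 D` with the digon `[x,y]` of `D1`, the split vertex `z` of `D2` and the
split `Z1 ∪ Z2` of its neighbourhood made explicit. -/
structure IsOreCompAt (D1 D2 D : Dgr) (x y z : ℕ) (Z1 Z2 : Set ℕ) : Prop where
  bidirected_left : Bidirected D1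
  bidirected_right : Bidirected D2
  disjoint : Disjoint D1.verts D2.verts
  x_mem : x ∈ D1.verts
  y_mem : y ∈ D1.verts
  x_ne_y : x ≠ y
  adj_x_y : D1.Adj x y
  z_mem : z ∈ D2.verts
  union_eq : Z1 ∪ Z2 = {w | D2.Adj z w}
  disjoint_Z : Disjoint Z1 Z2
  Z1_nonempty : Z1.Nonempty
  Z2_nonempty : Z2.Nonempty
  verts_eq : D.verts = D1.verts ∪ D2.verts.erase z
  adj_iff : ∀ u v, D.Adj u v ↔
      (D1.Adj u v ∧ ¬(u = x ∧ v = y) ∧ ¬(u = y ∧ v = x)) ∨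
      (D2.Adj u v ∧ u ≠ z ∧ v ≠ z) ∨
      (u = x ∧ v ∈ Z1 ∧ D2.Adj z v) ∨ (v = x ∧ u ∈ Z1 ∧ D2.Adj u z) ∨
      (u = y ∧ v ∈ Z2 ∧ D2.Adj z v) ∨ (v = y ∧ u ∈ Z2 ∧ D2.Adj u z)

theorem IsOreComp.exists_isOreCompAt {D1 D2 D : Dgr} (h : IsOreComp D1 D2 D) :
    ∃ x y z Z1 Z2, IsOreCompAt D1 D2 D x y z Z1 Z2 := by
  obtain ⟨b1, b2, dj, x, y, z, Z1, Z2, hx, hy, hxy, hdig, hz, hZ, hZd, hZ1, hZ2, hv, hadj⟩ := h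
  exact ⟨x, y, z, Z1, Z2, b1, b2, dj, hx, hy, hxy, hdig, hz, hZ, hZd, hZ1, hZ2, hv, hadj⟩

namespace IsOreCompAt

variable {D1 D2 D : Dgr} {x y z : ℕ} {Z1 Z2 : Set ℕ}

theorem swap (h : IsOreCompAt D1 D2 D x y z Z1 Z2) : IsOreCompAt D1 D2 D y x z Z2 Z1 where
  bidirected_left := h.bidirected_left
  bidirected_right := h.bidirected_right
  disjoint := h.disjoint
  x_mem := h.y_mem
  y_mem := h.x_mem
  x_ne_y := h.x_ne_y.symm
  adj_x_y := h.bidirected_left h.adj_x_y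
  z_mem := h.z_mem
  union_eq := (Set.union_comm _ _).trans h.union_eq
  disjoint_Z := h.disjoint_Z.symm
  Z1_nonempty := h.Z2_nonempty
  Z2_nonempty := h.Z1_nonempty
  verts_eq := h.verts_eq
  adj_iff u v := (h.adj_iff u v).trans <| by
    constructor <;> rintro (⟨a, b, c⟩ | a | a | a | a | a)
    all_goals first
      | exact Or.inl ⟨a, c, b⟩
      | exact Or.inr (Or.inl a)
      | exact Or.inr (Or.inr (Or.inr (Or.inr (Or.inl a))))
      | exact Or.inr (Or.inr (Or.inr (Or.inr (Or.inr a))))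
      | exact Or.inr (Or.inr (Or.inl a))
      | exact Or.inr (Or.inr (Or.inr (Or.inl a)))

variable (h : IsOreCompAt D1 D2 D x y z Z1 Z2)
include h

theorem not_mem_right {a : ℕ} (ha : a ∈ D1.verts) : a ∉ D2.verts :=
  Finset.disjoint_left.1 h.disjoint ha

theorem not_mem_left {a : ℕ} (ha : a ∈ D2.verts) : a ∉ D1.verts :=
  Finset.disjoint_right.1 h.disjoint ha

theorem mem_of_mem_left {a : ℕ} (ha : a ∈ D1.verts) : a ∈ D.verts :=
  h.verts_eq ▸ Finset.mem_union_left _ ha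

theorem mem_of_mem_right {a : ℕ} (ha : a ∈ D2.verts) (haz : a ≠ z) : a ∈ D.verts :=
  h.verts_eq ▸ Finset.mem_union_right _ (Finset.mem_erase.2 ⟨haz, ha⟩)

theorem mem_right_of_not_mem_left {a : ℕ} (ha : a ∈ D.verts) (ha1 : a ∉ D1.verts) :
    a ∈ D2.verts ∧ a ≠ z := by
  rw [h.verts_eq, Finset.mem_union] at ha
  exact (Finset.mem_erase.1 (ha.resolve_left ha1)).symm

theorem adj_z_of_mem_Z1 {w : ℕ} (hw : w ∈ Z1) : D2.Adj z w :=
  (h.union_eq ▸ Set.mem_union_left Z2 hw : w ∈ {w | D2.Adj z w})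

theorem mem_right_of_mem_Z1 {w : ℕ} (hw : w ∈ Z1) : w ∈ D2.verts ∧ w ≠ z :=
  have hzw := h.adj_z_of_mem_Z1 hw
  ⟨(D2.adj_mem hzw).2, fun e => D2.adj_irrefl z (e ▸ hzw)⟩

theorem adj_x_of_mem_Z1 {w : ℕ} (hw : w ∈ Z1) : D.Adj x w :=
  (h.adj_iff x w).2 (Or.inr (Or.inr (Or.inl ⟨rfl, hw, h.adj_z_of_mem_Z1 hw⟩)))

theorem bidirected : Bidirected D := by
  intro u v huv
  rw [h.adj_iff] at huv ⊢
  rcases huv with ⟨a, b, c⟩ | ⟨a, b, c⟩ | ⟨a, b, c⟩ | ⟨a, b, c⟩ | ⟨a, b, c⟩ | ⟨a, b, c⟩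
  · exact Or.inl ⟨h.bidirected_left a, fun e => c e.symm, fun e => b e.symm⟩
  · exact Or.inr (Or.inl ⟨h.bidirected_right a, c, b⟩)
  · exact Or.inr (Or.inr (Or.inr (Or.inl ⟨a, b, h.bidirected_right c⟩)))
  · exact Or.inr (Or.inr (Or.inl ⟨a, b, h.bidirected_right c⟩))
  · exact Or.inr (Or.inr (Or.inr (Or.inr (Or.inr ⟨a, b, h.bidirected_right c⟩))))
  · exact Or.inr (Or.inr (Or.inr (Or.inr (Or.inl ⟨a, b, h.bidirected_right c⟩))))

theorem adj_left_iff {u v : ℕ} (hu : u ∈ D1.verts) (hv : v ∈ D1.verts) :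
    D.Adj u v ↔ D1.Adj u v ∧ ¬(u = x ∧ v = y) ∧ ¬(u = y ∧ v = x) := by
  refine ⟨fun huv => ?_, fun huv => (h.adj_iff u v).2 (Or.inl huv)⟩
  rcases (h.adj_iff u v).1 huv with a | ⟨a, -⟩ | ⟨-, a, -⟩ | ⟨-, a, -⟩ | ⟨-, a, -⟩ | ⟨-, a, -⟩
  · exact a
  · exact absurd (D2.adj_mem a).1 (h.not_mem_right hu)
  · exact absurd (h.mem_right_of_mem_Z1 a).1 (h.not_mem_right hv)
  · exact absurd (h.mem_right_of_mem_Z1 a).1 (h.not_mem_right hu)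
  · exact absurd (h.swap.mem_right_of_mem_Z1 a).1 (h.not_mem_right hv)
  · exact absurd (h.swap.mem_right_of_mem_Z1 a).1 (h.not_mem_right hu)

theorem adj_right_iff {u v : ℕ} (hu : u ∈ D2.verts) (hv : v ∈ D2.verts) (huz : u ≠ z)
    (hvz : v ≠ z) : D.Adj u v ↔ D2.Adj u v := by
  refine ⟨fun huv => ?_, fun huv => (h.adj_iff u v).2 (Or.inr (Or.inl ⟨huv, huz, hvz⟩))⟩
  rcases (h.adj_iff u v).1 huv with ⟨a, -⟩ | ⟨a, -⟩ | ⟨rfl, -⟩ | ⟨rfl, -⟩ | ⟨rfl, -⟩ | ⟨rfl, -⟩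
  · exact absurd (D1.adj_mem a).1 (h.not_mem_left hu)
  · exact a
  · exact absurd hu (h.not_mem_right h.x_mem)
  · exact absurd hv (h.not_mem_right h.x_mem)
  · exact absurd hu (h.not_mem_right h.y_mem)
  · exact absurd hv (h.not_mem_right h.y_mem)

theorem adj_cross_iff {u v : ℕ} (hu : u ∈ D1.verts) (hv : v ∈ D2.verts) :
    D.Adj u v ↔ (u = x ∧ v ∈ Z1) ∨ (u = y ∧ v ∈ Z2) := by
  refine ⟨fun huv => ?_, ?_⟩
  · rcases (h.adj_iff u v).1 huv with ⟨a, -⟩ | ⟨a, -⟩ | ⟨a, b, -⟩ | ⟨rfl, -⟩ | ⟨a, b, -⟩ |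
      ⟨rfl, -⟩
    · exact absurd (D1.adj_mem a).2 (h.not_mem_left hv)
    · exact absurd (D2.adj_mem a).1 (h.not_mem_right hu)
    · exact Or.inl ⟨a, b⟩
    · exact absurd hv (h.not_mem_right h.x_mem)
    · exact Or.inr ⟨a, b⟩
    · exact absurd hv (h.not_mem_right h.y_mem)
  · rintro (⟨rfl, hv1⟩ | ⟨rfl, hv2⟩)
    exacts [h.adj_x_of_mem_Z1 hv1, h.swap.adj_x_of_mem_Z1 hv2]

theorem not_adj_x_y : ¬ D.Adj x y := fun hxy =>
  ((h.adj_left_iff h.x_mem h.y_mem).1 hxy).2.1 ⟨rfl, rfl⟩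

theorem outNbhd_of_mem_left {v : ℕ} (hv : v ∈ D1.verts) (hvx : v ≠ x) (hvy : v ≠ y) :
    {u | D.Adj v u} = {u | D1.Adj v u} := by
  ext u
  refine ⟨fun hvu => ?_, fun hvu => (h.adj_iff v u).2 (Or.inl ⟨hvu, (hvx ·.1), (hvy ·.1)⟩)⟩
  rcases (h.adj_iff v u).1 hvu with ⟨a, -⟩ | ⟨a, -⟩ | ⟨a, -⟩ | ⟨-, a, -⟩ | ⟨a, -⟩ | ⟨-, a, -⟩
  · exact a
  · exact absurd (D2.adj_mem a).1 (h.not_mem_right hv)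
  · exact absurd a hvx
  · exact absurd (h.mem_right_of_mem_Z1 a).1 (h.not_mem_right hv)
  · exact absurd a hvy
  · exact absurd (h.swap.mem_right_of_mem_Z1 a).1 (h.not_mem_right hv)

theorem outNbhd_of_mem_Z1 {v : ℕ} (hv : v ∈ Z1) :
    {u | D.Adj v u} = insert x ({u | D2.Adj v u} \ {z}) := by
  obtain ⟨hv2, hvz⟩ := h.mem_right_of_mem_Z1 hv
  ext u
  refine ⟨fun hvu => ?_, ?_⟩
  · rcases (h.adj_iff v u).1 hvu with ⟨a, -⟩ | ⟨a, -, b⟩ | ⟨rfl, -⟩ | ⟨a, -⟩ | ⟨rfl, -⟩ |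
      ⟨-, a, -⟩
    · exact absurd (D1.adj_mem a).1 (h.not_mem_left hv2)
    · exact Or.inr ⟨a, b⟩
    · exact absurd hv2 (h.not_mem_right h.x_mem)
    · exact Or.inl a
    · exact absurd hv2 (h.not_mem_right h.y_mem)
    · exact absurd a (Set.disjoint_left.1 h.disjoint_Z hv)
  · rintro (rfl | ⟨hvu, huz⟩)
    · exact h.bidirected (h.adj_x_of_mem_Z1 hv)
    · exact (h.adj_iff v u).2 (Or.inr (Or.inl ⟨hvu, hvz, huz⟩))

theorem outNbhd_of_mem_right {v : ℕ} (hv : v ∈ D2.verts) (hvz : v ≠ z) (hv1 : v ∉ Z1)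
    (hv2 : v ∉ Z2) : {u | D.Adj v u} = {u | D2.Adj v u} := by
  ext u
  refine ⟨fun hvu => ?_, fun hvu => ?_⟩
  · rcases (h.adj_iff v u).1 hvu with ⟨a, -⟩ | ⟨a, -⟩ | ⟨rfl, -⟩ | ⟨-, a, -⟩ | ⟨rfl, -⟩ |
      ⟨-, a, -⟩
    · exact absurd (D1.adj_mem a).1 (h.not_mem_left hv)
    · exact a
    · exact absurd hv (h.not_mem_right h.x_mem)
    · exact absurd a hv1
    · exact absurd hv (h.not_mem_right h.y_mem)
    · exact absurd a hv2
  · have huz : u ≠ z := by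
      rintro rfl
      have hvZ : v ∈ Z1 ∪ Z2 := h.union_eq ▸ h.bidirected_right hvu
      exact hvZ.elim hv1 hv2
    exact (h.adj_iff v u).2 (Or.inr (Or.inl ⟨hvu, hvz, huz⟩))

theorem ncard_outNbhd_of_mem_Z1 {v : ℕ} (hv : v ∈ Z1) :
    {u | D.Adj v u}.ncard = {u | D2.Adj v u}.ncard := by
  have hx : x ∉ {u | D2.Adj v u} := fun hx => h.not_mem_right h.x_mem (D2.adj_mem hx).2
  rw [h.outNbhd_of_mem_Z1 hv, Set.ncard_exchange hx (h.bidirected_right (h.adj_z_of_mem_Z1 hv))]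

theorem deg_of_mem_left {v : ℕ} (hv : v ∈ D1.verts) (hvx : v ≠ x) (hvy : v ≠ y) :
    D.deg v = D1.deg v := by
  rw [deg_eq_two_mul h.bidirected, deg_eq_two_mul h.bidirected_left,
    h.outNbhd_of_mem_left hv hvx hvy]

theorem deg_of_mem_right {v : ℕ} (hv : v ∈ D2.verts) (hvz : v ≠ z) : D.deg v = D2.deg v := by
  rw [deg_eq_two_mul h.bidirected, deg_eq_two_mul h.bidirected_right]
  by_cases hv1 : v ∈ Z1
  · rw [h.ncard_outNbhd_of_mem_Z1 hv1]
  by_cases hv2 : v ∈ Z2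
  · rw [h.swap.ncard_outNbhd_of_mem_Z1 hv2]
  rw [h.outNbhd_of_mem_right hv hvz hv1 hv2]

theorem outNbhd_y_of_Z2_eq {w : ℕ} (hZ2 : Z2 = {w}) :
    {u | D.Adj y u} = insert w ({u | D1.Adj y u} \ {x}) := by
  have hw : w ∈ Z2 := hZ2 ▸ rfl
  ext u
  refine ⟨fun hyu => ?_, ?_⟩
  · rcases (h.adj_iff y u).1 hyu with ⟨a, -, b⟩ | ⟨a, -⟩ | ⟨a, -⟩ | ⟨-, a, -⟩ | ⟨-, a, -⟩ |
      ⟨-, a, -⟩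
    · exact Or.inr ⟨a, fun e => b ⟨rfl, e⟩⟩
    · exact absurd (D2.adj_mem a).1 (h.not_mem_right h.y_mem)
    · exact absurd a.symm h.x_ne_y
    · exact absurd (h.mem_right_of_mem_Z1 a).1 (h.not_mem_right h.y_mem)
    · exact Or.inl (Set.mem_singleton_iff.1 (hZ2 ▸ a))
    · exact absurd (h.swap.mem_right_of_mem_Z1 a).1 (h.not_mem_right h.y_mem)
  · rintro (rfl | ⟨hyu, hux⟩)
    · exact h.swap.adj_x_of_mem_Z1 hw
    · exact (h.adj_left_iff h.y_mem (D1.adj_mem hyu).2).2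
        ⟨hyu, fun e => h.x_ne_y e.1.symm, fun e => hux e.2⟩

theorem deg_y_of_Z2_eq {w : ℕ} (hZ2 : Z2 = {w}) : D.deg y = D1.deg y := by
  have hw : w ∉ {u | D1.Adj y u} := fun hw =>
    h.not_mem_left (h.swap.mem_right_of_mem_Z1 (hZ2 ▸ rfl : w ∈ Z2)).1 (D1.adj_mem hw).2
  rw [deg_eq_two_mul h.bidirected, deg_eq_two_mul h.bidirected_left, h.outNbhd_y_of_Z2_eq hZ2,
    Set.ncard_exchange hw (h.bidirected_left h.adj_x_y)]

theorem bdry_verts_left : D.bdry D1.verts = {x, y} := by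
  rw [bdry_eq_of_bidirected h.bidirected]
  ext v
  refine ⟨fun ⟨hv, u, hu, hvu⟩ => ?_, ?_⟩
  · obtain ⟨hu2, -⟩ := h.mem_right_of_not_mem_left (D.adj_mem hvu).2 hu
    rcases (h.adj_cross_iff hv hu2).1 hvu with ⟨rfl, -⟩ | ⟨rfl, -⟩
    exacts [Or.inl rfl, Or.inr rfl]
  · rintro (rfl | rfl)
    · obtain ⟨w, hw⟩ := h.Z1_nonempty
      exact ⟨h.x_mem, w, h.not_mem_left (h.mem_right_of_mem_Z1 hw).1, h.adj_x_of_mem_Z1 hw⟩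
    · obtain ⟨w, hw⟩ := h.Z2_nonempty
      exact ⟨h.y_mem, w, h.not_mem_left (h.swap.mem_right_of_mem_Z1 hw).1,
        h.swap.adj_x_of_mem_Z1 hw⟩

theorem induce_verts_left_addDigon : (D.induce D1.verts).addDigon x y = D1 := by
  have hverts : (D.induce D1.verts).verts = D1.verts :=
    Finset.inter_eq_right.2 fun _ => h.mem_of_mem_left
  refine Dgr.ext hverts ?_
  funext u v
  refine propext ⟨?_, fun huv => ?_⟩
  · rintro (⟨huv, hu, hv⟩ | ⟨-, -, -, ⟨rfl, rfl⟩ | ⟨rfl, rfl⟩⟩)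
    exacts [((h.adj_left_iff hu hv).1 huv).1, h.adj_x_y, h.bidirected_left h.adj_x_y]
  · obtain ⟨hu, hv⟩ := D1.adj_mem huv
    by_cases hxy : (u = x ∧ v = y) ∨ (u = y ∧ v = x)
    · exact Or.inr ⟨h.x_ne_y, hverts.symm ▸ h.x_mem, hverts.symm ▸ h.y_mem, hxy⟩
    · exact Or.inl ⟨(h.adj_left_iff hu hv).2 ⟨huv, (hxy <| .inl ·), (hxy <| .inr ·)⟩, hu, hv⟩

theorem card_lt_of_disjoint_Z1 {S : Finset ℕ} (hS : S ⊆ D.verts) (hSZ : Disjoint (S : Set ℕ) Z1) :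
    S.card < D.verts.card := by
  obtain ⟨w, hw⟩ := h.Z1_nonempty
  obtain ⟨hw2, hwz⟩ := h.mem_right_of_mem_Z1 hw
  exact Finset.card_lt_card ((Finset.ssubset_iff_of_subset hS).2
    ⟨w, h.mem_of_mem_right hw2 hwz, fun hwS => Set.disjoint_left.1 hSZ hwS hw⟩)

theorem oreCollapsible_verts_left (h1 : IsOre4 D1) : D.OreCollapsible D1.verts :=
  ⟨fun _ => h.mem_of_mem_left,
    h.card_lt_of_disjoint_Z1 (fun _ => h.mem_of_mem_left)
      (Set.disjoint_left.2 fun _ hv hv1 => h.not_mem_left (h.mem_right_of_mem_Z1 hv1).1 hv),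
    x, y, h.x_ne_y, h.bdry_verts_left, h.induce_verts_left_addDigon.symm ▸ h1⟩

theorem bdry_eq_of_subset_right {S : Finset ℕ} (hS : S ⊆ D2.verts) (hzS : z ∉ S) :
    D.bdry S = D2.bdry S := by
  rw [bdry_eq_of_bidirected h.bidirected, bdry_eq_of_bidirected h.bidirected_right]
  ext v
  refine and_congr_right fun hv => ⟨fun ⟨u, hu, hvu⟩ => ?_, fun ⟨u, hu, hvu⟩ => ?_⟩
  · rcases (h.adj_iff v u).1 hvu with ⟨a, -⟩ | ⟨a, -⟩ | ⟨rfl, -⟩ | ⟨-, -, a⟩ | ⟨rfl, -⟩ |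
      ⟨-, -, a⟩
    · exact absurd (D1.adj_mem a).1 (h.not_mem_left (hS hv))
    · exact ⟨u, hu, a⟩
    · exact absurd (hS hv) (h.not_mem_right h.x_mem)
    · exact ⟨z, hzS, a⟩
    · exact absurd (hS hv) (h.not_mem_right h.y_mem)
    · exact ⟨z, hzS, a⟩
  · by_cases huz : u = z
    · subst huz
      have hvZ : v ∈ Z1 ∪ Z2 := h.union_eq ▸ h.bidirected_right hvu
      rcases hvZ with hv1 | hv2
      · exact ⟨x, fun hx => h.not_mem_right h.x_mem (hS hx), h.bidirected (h.adj_x_of_mem_Z1 hv1)⟩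
      · exact ⟨y, fun hy => h.not_mem_right h.y_mem (hS hy),
          h.bidirected (h.swap.adj_x_of_mem_Z1 hv2)⟩
    · exact ⟨u, hu, (h.adj_right_iff (hS hv) (D2.adj_mem hvu).2 (ne_of_mem_of_not_mem hv hzS)
        huz).2 hvu⟩

theorem bdry_eq_of_subset_left {S : Finset ℕ} (hS : S ⊆ D1.verts) (hxS : x ∉ S) :
    D.bdry S = D1.bdry S := by
  rw [bdry_eq_of_bidirected h.bidirected, bdry_eq_of_bidirected h.bidirected_left]
  ext v
  refine and_congr_right fun hv => ⟨fun ⟨u, hu, hvu⟩ => ?_, fun ⟨u, hu, hvu⟩ => ?_⟩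
  · rcases (h.adj_iff v u).1 hvu with ⟨a, -⟩ | ⟨a, -⟩ | ⟨rfl, -⟩ | ⟨-, a, -⟩ | ⟨rfl, -⟩ |
      ⟨-, a, -⟩
    · exact ⟨u, hu, a⟩
    · exact absurd (D2.adj_mem a).1 (h.not_mem_right (hS hv))
    · exact absurd hv hxS
    · exact absurd (h.mem_right_of_mem_Z1 a).1 (h.not_mem_right (hS hv))
    · exact ⟨x, hxS, h.bidirected_left h.adj_x_y⟩
    · exact absurd (h.swap.mem_right_of_mem_Z1 a).1 (h.not_mem_right (hS hv))
  · by_cases hyx : v = y ∧ u = x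
    · obtain ⟨rfl, -⟩ := hyx
      obtain ⟨w, hw⟩ := h.Z2_nonempty
      exact ⟨w, fun hwS => h.not_mem_left (h.swap.mem_right_of_mem_Z1 hw).1 (hS hwS),
        h.swap.adj_x_of_mem_Z1 hw⟩
    · exact ⟨u, hu, (h.adj_left_iff (hS hv) (D1.adj_mem hvu).2).2
        ⟨hvu, fun e => hxS (e.1 ▸ hv), hyx⟩⟩

theorem oreCollapsible_of_right {S : Finset ℕ} (hS : D2.OreCollapsible S) (hzS : z ∉ S) :
    D.OreCollapsible S := by
  have hSz : ∀ v ∈ S, v ≠ z := fun _ hv => ne_of_mem_of_not_mem hv hzS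
  have hSD : S ⊆ D.verts := fun v hv => h.mem_of_mem_right (hS.1 hv) (hSz v hv)
  refine hS.of_induce_eq hSD (Finset.card_lt_card ((Finset.ssubset_iff_of_subset hSD).2
    ⟨x, h.mem_of_mem_left h.x_mem, fun hx => h.not_mem_right h.x_mem (hS.1 hx)⟩))
    (induce_eq_induce hSD hS.1 fun u hu v hv => ?_) (h.bdry_eq_of_subset_right hS.1 hzS)
  exact h.adj_right_iff (hS.1 hu) (hS.1 hv) (hSz u hu) (hSz v hv)

theorem oreCollapsible_of_left {S : Finset ℕ} (hS : D1.OreCollapsible S) (hxS : x ∉ S) :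
    D.OreCollapsible S := by
  have hSD : S ⊆ D.verts := fun v hv => h.mem_of_mem_left (hS.1 hv)
  refine hS.of_induce_eq hSD (h.card_lt_of_disjoint_Z1 hSD (Set.disjoint_left.2
      fun v hv hv1 => h.not_mem_left (h.mem_right_of_mem_Z1 hv1).1 (hS.1 hv)))
    (induce_eq_induce hSD hS.1 fun u hu v hv => ?_) (h.bdry_eq_of_subset_left hS.1 hxS)
  rw [h.adj_left_iff (hS.1 hu) (hS.1 hv)]
  exact ⟨fun huv => huv.1, fun huv => ⟨huv, fun e => hxS (e.1 ▸ hu), fun e => hxS (e.2 ▸ hv)⟩⟩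

theorem isEmerald_of_right {e : Finset ℕ} (he : D2.IsEmerald e) (hze : z ∉ e) :
    D.IsEmerald e := by
  obtain ⟨hcard, he2, hadj, hdeg⟩ := he
  have hez : ∀ v ∈ e, v ≠ z := fun _ hv => ne_of_mem_of_not_mem hv hze
  refine ⟨hcard, fun v hv => h.mem_of_mem_right (he2 hv) (hez v hv), fun u hu v hv huv => ?_,
    fun v hv => (h.deg_of_mem_right (he2 hv) (hez v hv)).trans (hdeg v hv)⟩
  exact (h.adj_right_iff (he2 hu) (he2 hv) (hez u hu) (hez v hv)).2 (hadj u hu v hv huv)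

theorem isEmerald_of_left {w : ℕ} (hZ2 : Z2 = {w}) {e : Finset ℕ} (he : D1.IsEmerald e)
    (hxe : x ∉ e) : D.IsEmerald e := by
  obtain ⟨hcard, he1, hadj, hdeg⟩ := he
  have hex : ∀ v ∈ e, v ≠ x := fun _ hv => ne_of_mem_of_not_mem hv hxe
  refine ⟨hcard, fun v hv => h.mem_of_mem_left (he1 hv), fun u hu v hv huv => ?_,
    fun v hv => ?_⟩
  · exact (h.adj_left_iff (he1 hu) (he1 hv)).2
      ⟨hadj u hu v hv huv, fun e => hex u hu e.1, fun e => hex v hv e.2⟩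
  · rw [← hdeg v hv]
    by_cases hvy : v = y
    · subst hvy
      exact h.deg_y_of_Z2_eq hZ2
    · exact h.deg_of_mem_left (he1 hv) (hex v hv) hvy

theorem hasCollapsibleOrEmeraldOff_of_right {A : Finset ℕ}
    (hA : D2.HasCollapsibleOrEmeraldOff (insert z A)) : D.HasCollapsibleOrEmeraldOff A := by
  rcases hA with ⟨S, hS, hSA⟩ | ⟨e, he, heA⟩
  · rw [Finset.disjoint_insert_right] at hSA
    exact Or.inl ⟨S, h.oreCollapsible_of_right hS hSA.1, hSA.2⟩
  · rw [Finset.disjoint_insert_right] at heA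
    exact Or.inr ⟨e, h.isEmerald_of_right he heA.1, heA.2⟩

theorem hasCollapsibleOrEmeraldOff_of_left {w : ℕ} (hZ2 : Z2 = {w}) {A : Finset ℕ}
    (hA : D1.HasCollapsibleOrEmeraldOff (insert x A)) : D.HasCollapsibleOrEmeraldOff A := by
  rcases hA with ⟨S, hS, hSA⟩ | ⟨e, he, heA⟩
  · rw [Finset.disjoint_insert_right] at hSA
    exact Or.inl ⟨S, h.oreCollapsible_of_left hS hSA.1, hSA.2⟩
  · rw [Finset.disjoint_insert_right] at heA
    exact Or.inr ⟨e, h.isEmerald_of_left hZ2 he heA.1, heA.2⟩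

end IsOreCompAt

theorem IsOre4.hasCollapsibleOrEmeraldOff_singleton {E : Dgr} (hE : IsOre4 E) {v : ℕ}
    (hv : v ∈ E.verts) : E.HasCollapsibleOrEmeraldOff {v} := by
  induction hE generalizing v with
  | k4 E hK =>
    exact Or.inr ⟨E.verts.erase v, hK.isEmerald_erase hv,
      Finset.disjoint_singleton_right.2 (Finset.notMem_erase v _)⟩
  | comp D1 D2 D h1 h2 hc _ IH2 =>
    obtain ⟨x, y, z, Z1, Z2, h⟩ := hc.exists_isOreCompAt
    by_cases hv1 : v ∈ D1.verts
    · refine h.hasCollapsibleOrEmeraldOff_of_right ((IH2 h.z_mem).of_inter_verts_subset ?_)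
      rw [Finset.insert_inter_of_mem h.z_mem,
        Finset.singleton_inter_of_notMem (h.not_mem_right hv1), Finset.insert_empty]
    · exact Or.inl ⟨D1.verts, h.oreCollapsible_verts_left h1,
        Finset.disjoint_singleton_right.2 hv1⟩

namespace IsOreCompAt

variable {D1 D2 D : Dgr} {x y z : ℕ} {Z1 Z2 : Set ℕ} (h : IsOreCompAt D1 D2 D x y z Z1 Z2)
include h

theorem mem_Z1_of_isTriangle {t : Finset ℕ} (ht : D.IsTriangle t) (hxt : x ∈ t) {b : ℕ}
    (hb : b ∈ t) (hb1 : b ∉ D1.verts) {c : ℕ} (hc : c ∈ t) (hcx : c ≠ x) : c ∈ Z1 := by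
  obtain ⟨hb2, -⟩ := h.mem_right_of_not_mem_left (ht.2.1 hb) hb1
  by_cases hc1 : c ∈ D1.verts
  · have hcb : c ≠ b := ne_of_mem_of_not_mem hc1 hb1
    rcases (h.adj_cross_iff hc1 hb2).1 (ht.2.2 c hc b hb hcb) with ⟨rfl, -⟩ | ⟨rfl, -⟩
    · exact absurd rfl hcx
    · exact absurd (ht.2.2 x hxt c hc hcx.symm) h.not_adj_x_y
  · obtain ⟨hc2, -⟩ := h.mem_right_of_not_mem_left (ht.2.1 hc) hc1
    rcases (h.adj_cross_iff h.x_mem hc2).1 (ht.2.2 x hxt c hc hcx.symm) with ⟨-, hc⟩ | ⟨hxy, -⟩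
    exacts [hc, absurd hxy h.x_ne_y]

theorem isTriangle_cases {t : Finset ℕ} (ht : D.IsTriangle t) {a b : ℕ} (ha : a ∈ t)
    (ha1 : a ∈ D1.verts) (hb : b ∈ t) (hb1 : b ∉ D1.verts) :
    (x ∈ t ∧ ∀ c ∈ t, c ≠ x → c ∈ Z1) ∨ (y ∈ t ∧ ∀ c ∈ t, c ≠ y → c ∈ Z2) := by
  obtain ⟨hb2, -⟩ := h.mem_right_of_not_mem_left (ht.2.1 hb) hb1
  rcases (h.adj_cross_iff ha1 hb2).1 (ht.2.2 a ha b hb (ne_of_mem_of_not_mem ha1 hb1))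
    with ⟨rfl, -⟩ | ⟨rfl, -⟩
  · exact Or.inl ⟨ha, fun _ hc hcx => h.mem_Z1_of_isTriangle ht ha hb hb1 hc hcx⟩
  · exact Or.inr ⟨ha, fun _ hc hcy => h.swap.mem_Z1_of_isTriangle ht ha hb hb1 hc hcy⟩

theorem isTriangle_insert_z {t : Finset ℕ} (ht : D.IsTriangle t) (hxt : x ∈ t)
    (htZ1 : ∀ c ∈ t, c ≠ x → c ∈ Z1) : D2.IsTriangle (insert z (t.erase x)) := by
  have hZ1 : ∀ c ∈ t.erase x, c ∈ Z1 := fun c hc =>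
    htZ1 c (Finset.mem_of_mem_erase hc) (Finset.ne_of_mem_erase hc)
  have hz : z ∉ t.erase x := fun hz => (h.mem_right_of_mem_Z1 (hZ1 z hz)).2 rfl
  refine ⟨?_, ?_, ?_⟩
  · rw [Finset.card_insert_of_notMem hz, Finset.card_erase_of_mem hxt, ht.1]
  · exact Finset.insert_subset h.z_mem fun c hc => (h.mem_right_of_mem_Z1 (hZ1 c hc)).1
  · intro u hu v hv huv
    rcases Finset.mem_insert.1 hu with rfl | hut
    · rcases Finset.mem_insert.1 hv with rfl | hvt
      exacts [absurd rfl huv, h.adj_z_of_mem_Z1 (hZ1 v hvt)]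
    · rcases Finset.mem_insert.1 hv with rfl | hvt
      · exact h.bidirected_right (h.adj_z_of_mem_Z1 (hZ1 u hut))
      · obtain ⟨hu2, huz⟩ := h.mem_right_of_mem_Z1 (hZ1 u hut)
        obtain ⟨hv2, hvz⟩ := h.mem_right_of_mem_Z1 (hZ1 v hvt)
        exact (h.adj_right_iff hu2 hv2 huz hvz).1 (ht.2.2 u (Finset.mem_of_mem_erase hut) v
          (Finset.mem_of_mem_erase hvt) huv)

/-- `z` has exactly three neighbours in `K4`, split between `Z1` and the nonempty `Z2`. -/
theorem exists_Z2_eq_singleton (hK2 : IsBidirComplete 4 D2) {s : Finset ℕ} (hs : 2 ≤ s.card)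
    (hsZ : ↑s ⊆ Z1) : ∃ w, Z2 = {w} := by
  have hfin := D2.outNbhd_finite z
  have hZ1 : Z1.Finite := hfin.subset (h.union_eq ▸ Set.subset_union_left)
  have hZ2 : Z2.Finite := hfin.subset (h.union_eq ▸ Set.subset_union_right)
  have hsum : Z1.ncard + Z2.ncard = 3 := by
    rw [← Set.ncard_union_eq h.disjoint_Z hZ1 hZ2, h.union_eq, hK2.ncard_outNbhd h.z_mem]
  have h1 : 2 ≤ Z1.ncard := hs.trans ((Set.ncard_coe_finset s).symm.trans_le
    (Set.ncard_le_ncard hsZ hZ1))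
  have h2 : 0 < Z2.ncard := (Set.ncard_pos hZ2).2 h.Z2_nonempty
  exact Set.ncard_eq_one.1 (by omega)

theorem hasCollapsibleOrEmeraldOff_of_isTriangle_of_x_mem (h1 : IsOre4 D1)
    (ih : ¬ IsBidirComplete 4 D2 → ∀ {t}, D2.IsTriangle t → D2.HasCollapsibleOrEmeraldOff t)
    {t : Finset ℕ} (ht : D.IsTriangle t) (hxt : x ∈ t) (htZ1 : ∀ c ∈ t, c ≠ x → c ∈ Z1) :
    D.HasCollapsibleOrEmeraldOff t := by
  by_cases hK2 : IsBidirComplete 4 D2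
  · obtain ⟨w, hw⟩ := h.exists_Z2_eq_singleton hK2 (s := t.erase x)
      (by rw [Finset.card_erase_of_mem hxt, ht.1])
      fun c hc => htZ1 c (Finset.mem_of_mem_erase hc) (Finset.ne_of_mem_erase hc)
    refine h.hasCollapsibleOrEmeraldOff_of_left hw
      ((h1.hasCollapsibleOrEmeraldOff_singleton h.x_mem).of_inter_verts_subset ?_)
    intro c hc
    obtain ⟨hc, hc1⟩ := Finset.mem_inter.1 hc
    rcases Finset.mem_insert.1 hc with rfl | hct
    · exact Finset.mem_singleton_self c
    by_contra hcx
    exact h.not_mem_left (h.mem_right_of_mem_Z1 (htZ1 c hct (Finset.mem_singleton.not.1 hcx))).1 hc1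
  · refine h.hasCollapsibleOrEmeraldOff_of_right
      ((ih hK2 (h.isTriangle_insert_z ht hxt htZ1)).of_inter_verts_subset ?_)
    intro c hc
    obtain ⟨hc, hc2⟩ := Finset.mem_inter.1 hc
    rcases Finset.mem_insert.1 hc with rfl | hct
    · exact Finset.mem_insert_self c _
    · exact Finset.mem_insert_of_mem (Finset.mem_erase.2
        ⟨fun hcx => h.not_mem_right h.x_mem (hcx ▸ hc2), hct⟩)

end IsOreCompAt

theorem IsOre4.hasCollapsibleOrEmeraldOff_of_isTriangle {D : Dgr} (hD : IsOre4 D)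
    (hK4 : ¬ IsBidirComplete 4 D) {t : Finset ℕ} (ht : D.IsTriangle t) :
    D.HasCollapsibleOrEmeraldOff t := by
  induction hD generalizing t with
  | k4 D hK => exact absurd hK hK4
  | comp D1 D2 D h1 h2 hc _ IH2 =>
    obtain ⟨x, y, z, Z1, Z2, h⟩ := hc.exists_isOreCompAt
    by_cases hmeet : ∃ a ∈ t, a ∈ D1.verts
    · obtain ⟨a, ha, ha1⟩ := hmeet
      by_cases hleave : ∃ b ∈ t, b ∉ D1.verts
      · obtain ⟨b, hb, hb1⟩ := hleave
        rcases h.isTriangle_cases ht ha ha1 hb hb1 with ⟨hxt, htZ⟩ | ⟨hyt, htZ⟩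
        · exact h.hasCollapsibleOrEmeraldOff_of_isTriangle_of_x_mem h1 IH2 ht hxt htZ
        · exact h.swap.hasCollapsibleOrEmeraldOff_of_isTriangle_of_x_mem h1 IH2 ht hyt htZ
      · push Not at hleave
        refine h.hasCollapsibleOrEmeraldOff_of_right
          ((h2.hasCollapsibleOrEmeraldOff_singleton h.z_mem).of_inter_verts_subset ?_)
        intro c hc
        obtain ⟨hc, hc2⟩ := Finset.mem_inter.1 hc
        rcases Finset.mem_insert.1 hc with rfl | hct
        exacts [Finset.mem_singleton_self c, absurd (hleave c hct) (h.not_mem_left hc2)]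
    · push Not at hmeet
      exact Or.inl ⟨D1.verts, h.oreCollapsible_verts_left h1,
        Finset.disjoint_left.2 fun v hv1 hvt => hmeet v hvt hv1⟩

end Dgr

/-- a 4-Ore digraph other than the bidirected `K4` contains, for
every bidirected triangle `t`, an Ore-collapsible subdigraph or an emerald
disjoint from `t`. -/
theorem stmt_7 (D : Dgr) (h : IsOre4 D) (hnotK4 : ¬ Dgr.IsBidirComplete 4 D)
    (t : Finset ℕ) (ht3 : t.card = 3) (htv : t ⊆ D.verts)
    (htadj : ∀ u ∈ t, ∀ v ∈ t, u ≠ v → D.Adj u v) :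
    (∃ S : Finset ℕ, D.OreCollapsible S ∧ Disjoint S t) ∨
    (∃ s : Finset ℕ, D.IsEmerald s ∧ Disjoint s t) :=
  h.hasCollapsibleOrEmeraldOff_of_isTriangle hnotK4 ⟨ht3, htv, htadj⟩
end

section
/- If R is an Ore-collapsible induced subdigraph of a 4-Ore digraph D, then there exists a diamond or an emerald of D all of whose vertices lie in V(R). -/
open Dgr

/-!
Call an emerald or a diamond of `D` a gem. Every 4-Ore digraph `T` has a gem avoiding any given
vertex, and for every arc `ab` a gem that is either an emerald avoiding `a` and `b` or a diamond
whose missing digon contains whichever of `a`, `b` it meets. This holds for the bidirected `K4`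
(any three vertices, resp. all four with missing pair `{a, b}`) and survives Ore composition of
`D1` (digon `[x,y]`) and `D2` (split vertex `z`): a gem of `D2` avoiding `z` and a gem of `D1`
for the arc `xy` keep their degree-6 vertices and their arcs in the composition; as they lie on
different sides, one of them avoids any given vertex, and one of them suits any given arc.

If `R ∪ [u,v]` is 4-Ore, its gem for the arc `uv` uses `u` and `v` at most as ends of the
missing digon of a diamond; all its other vertices are interior to `R`, so have the same
neighbourhoods in `D`, and the gem is one of `D`.
-/

theorem Set.ncard_setOf_replace {α : Type*} {N : Set α} (hN : N.Finite) {z r : α} (hr : r ∉ N) :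
    {u | u ∈ N ∧ u ≠ z ∨ z ∈ N ∧ u = r}.ncard = N.ncard := by
  by_cases hz : z ∈ N
  · have hset : {u | u ∈ N ∧ u ≠ z ∨ z ∈ N ∧ u = r} = insert r (N \ {z}) := by
      ext u
      simp only [Set.mem_ofPred_eq, Set.mem_insert_iff, Set.mem_sdiff, Set.mem_singleton_iff]
      tauto
    rw [hset, Set.ncard_insert_of_notMem (fun h => hr h.1) (hN.sdiff),
      Set.ncard_sdiff_singleton_add_one hz hN]
  · congr 1
    ext u
    simp only [Set.mem_ofPred_eq]
    constructor
    · rintro (⟨hu, -⟩ | ⟨h, -⟩)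
      exacts [hu, absurd h hz]
    · intro hu
      exact Or.inl ⟨hu, fun h => hz (h ▸ hu)⟩

namespace Dgr

section Gems

variable {T D : Dgr} {s : Finset ℕ} {a b c p q x y : ℕ}

lemma ne_of_adj (h : T.Adj a b) : a ≠ b := by
  rintro rfl
  exact T.adj_irrefl a h

def IsDiamondWith (T : Dgr) (s : Finset ℕ) (p q : ℕ) : Prop :=
  s.card = 4 ∧ s ⊆ T.verts ∧ p ∈ s ∧ q ∈ s ∧ p ≠ q ∧
  (∀ u ∈ s, ∀ v ∈ s, u ≠ v → ¬(u = p ∧ v = q) → ¬(u = q ∧ v = p) → T.Adj u v) ∧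
  (∀ v ∈ s, v ≠ p → v ≠ q → T.deg v = 6)

lemma isDiamond_iff_exists_isDiamondWith : T.IsDiamond s ↔ ∃ p q, T.IsDiamondWith s p q := by
  constructor
  · rintro ⟨hcard, hs, p, hp, q, hq, hpq, hadj, hdeg⟩
    exact ⟨p, q, hcard, hs, hp, hq, hpq, hadj, hdeg⟩
  · rintro ⟨p, q, hcard, hs, hp, hq, hpq, hadj, hdeg⟩
    exact ⟨hcard, hs, p, hp, q, hq, hpq, hadj, hdeg⟩

def IsGem (T : Dgr) (s : Finset ℕ) : Prop := T.IsEmerald s ∨ T.IsDiamond s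

def IsGemFor (T : Dgr) (a b : ℕ) (s : Finset ℕ) : Prop :=
  (T.IsEmerald s ∧ a ∉ s ∧ b ∉ s) ∨
    ∃ p q, T.IsDiamondWith s p q ∧ (a ∈ s → a = p ∨ a = q) ∧ (b ∈ s → b = p ∨ b = q)

def GemProperty (T : Dgr) : Prop :=
  (∀ w, ∃ s, T.IsGem s ∧ w ∉ s) ∧ ∀ a b, T.Adj a b → ∃ s, T.IsGemFor a b s

lemma IsGem.subset (h : T.IsGem s) : s ⊆ T.verts := by
  rcases h with h | h
  exacts [h.2.1, h.2.1]

lemma IsGemFor.isGem (h : T.IsGemFor a b s) : T.IsGem s := by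
  rcases h with ⟨he, -, -⟩ | ⟨p, q, hd, -, -⟩
  · exact Or.inl he
  · exact Or.inr (isDiamond_iff_exists_isDiamondWith.2 ⟨p, q, hd⟩)

lemma IsGem.isGemFor (h : T.IsGem s) (ha : a ∉ s) (hb : b ∉ s) : T.IsGemFor a b s := by
  rcases h with he | hd
  · exact Or.inl ⟨he, ha, hb⟩
  · obtain ⟨p, q, hd⟩ := isDiamond_iff_exists_isDiamondWith.1 hd
    exact Or.inr ⟨p, q, hd, fun h => absurd h ha, fun h => absurd h hb⟩

lemma IsGemFor.mono (h : T.IsGemFor x y s) (ha : a ∈ s → a = x ∨ a = y)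
    (hb : b ∈ s → b = x ∨ b = y) : T.IsGemFor a b s := by
  rcases h with ⟨he, hx, hy⟩ | ⟨p, q, hd, hxpq, hypq⟩
  · refine Or.inl ⟨he, fun has => ?_, fun hbs => ?_⟩
    · rcases ha has with rfl | rfl <;> contradiction
    · rcases hb hbs with rfl | rfl <;> contradiction
  · refine Or.inr ⟨p, q, hd, fun has => ?_, fun hbs => ?_⟩
    · rcases ha has with rfl | rfl
      exacts [hxpq has, hypq has]
    · rcases hb hbs with rfl | rfl
      exacts [hxpq hbs, hypq hbs]

def AgreesAt (T D : Dgr) (s : Finset ℕ) (c : ℕ) : Prop :=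
  D.deg c = T.deg c ∧ ∀ d ∈ s, (T.Adj c d → D.Adj c d) ∧ (T.Adj d c → D.Adj d c)

lemma agreesAt_of_adj_iff (hout : ∀ d, T.Adj c d ↔ D.Adj c d)
    (hin : ∀ d, T.Adj d c ↔ D.Adj d c) : AgreesAt T D s c := by
  refine ⟨?_, fun d _ => ⟨(hout d).1, (hin d).1⟩⟩
  simp only [deg, hout, hin]

lemma IsEmerald.transfer (h : T.IsEmerald s) (hs : s ⊆ D.verts)
    (hag : ∀ c ∈ s, AgreesAt T D s c) : D.IsEmerald s := by
  obtain ⟨hcard, -, hadj, hdeg⟩ := h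
  exact ⟨hcard, hs, fun u hu v hv huv => ((hag u hu).2 v hv).1 (hadj u hu v hv huv),
    fun v hv => (hag v hv).1.trans (hdeg v hv)⟩

lemma IsDiamondWith.transfer (h : T.IsDiamondWith s p q) (hs : s ⊆ D.verts)
    (hag : ∀ c ∈ s, c ≠ p → c ≠ q → AgreesAt T D s c) : D.IsDiamondWith s p q := by
  obtain ⟨hcard, -, hp, hq, hpq, hadj, hdeg⟩ := h
  refine ⟨hcard, hs, hp, hq, hpq, fun u hu v hv huv hnpq hnqp => ?_,
    fun v hv hvp hvq => (hag v hv hvp hvq).1.trans (hdeg v hv hvp hvq)⟩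
  have hT := hadj u hu v hv huv hnpq hnqp
  by_cases hu' : u ≠ p ∧ u ≠ q
  · exact ((hag u hu hu'.1 hu'.2).2 v hv).1 hT
  by_cases hv' : v ≠ p ∧ v ≠ q
  · exact ((hag v hv hv'.1 hv'.2).2 u hu).2 hT
  -- both ends of an arc other than the missing digon cannot lie in `{p, q}`
  omega

lemma IsGem.transfer (h : T.IsGem s) (hs : s ⊆ D.verts) (hag : ∀ c ∈ s, AgreesAt T D s c) :
    D.IsGem s := by
  rcases h with he | hd
  · exact Or.inl (he.transfer hs hag)
  · obtain ⟨p, q, hd⟩ := isDiamond_iff_exists_isDiamondWith.1 hd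
    exact Or.inr (isDiamond_iff_exists_isDiamondWith.2
      ⟨p, q, hd.transfer hs fun c hc _ _ => hag c hc⟩)

lemma IsGemFor.transfer (h : T.IsGemFor a b s) (hs : s ⊆ D.verts)
    (hag : ∀ c ∈ s, c ≠ a → c ≠ b → AgreesAt T D s c) : D.IsGemFor a b s := by
  rcases h with ⟨he, ha, hb⟩ | ⟨p, q, hd, hapq, hbpq⟩
  · refine Or.inl ⟨he.transfer hs fun c hc => hag c hc ?_ ?_, ha, hb⟩
    · rintro rfl; exact ha hc
    · rintro rfl; exact hb hc
  · refine Or.inr ⟨p, q, hd.transfer hs fun c hc hcp hcq => hag c hc ?_ ?_, hapq, hbpq⟩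
    · rintro rfl; rcases hapq hc with rfl | rfl <;> contradiction
    · rintro rfl; rcases hbpq hc with rfl | rfl <;> contradiction

end Gems

section Complete

variable {T : Dgr} {n v : ℕ}

lemma IsBidirComplete.deg_eq (hK : IsBidirComplete n T) (hv : v ∈ T.verts) :
    T.deg v = 2 * (n - 1) := by
  have hout : {u | T.Adj v u} = ↑(T.verts.erase v) := by
    ext u
    simp only [Set.mem_ofPred_eq, Finset.coe_erase, Set.mem_sdiff, Finset.mem_coe,
      Set.mem_singleton_iff]
    exact ⟨fun h => ⟨(T.adj_mem h).2, (ne_of_adj h).symm⟩,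
      fun ⟨hu, hne⟩ => hK.2 v hv u hu (Ne.symm hne)⟩
  have hin : {u | T.Adj u v} = ↑(T.verts.erase v) := by
    ext u
    simp only [Set.mem_ofPred_eq, Finset.coe_erase, Set.mem_sdiff, Finset.mem_coe,
      Set.mem_singleton_iff]
    exact ⟨fun h => ⟨(T.adj_mem h).1, ne_of_adj h⟩, fun ⟨hu, hne⟩ => hK.2 u hu v hv hne⟩
  rw [deg, hout, hin, Set.ncard_coe_finset, Finset.card_erase_of_mem hv, hK.1]
  omega

lemma IsBidirComplete.gemProperty (hK : IsBidirComplete 4 T) : T.GemProperty := by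
  have hdeg : ∀ v ∈ T.verts, T.deg v = 6 := fun v hv => hK.deg_eq hv
  refine ⟨fun w => ?_, fun a b hab => ?_⟩
  · have h3 : 3 ≤ (T.verts.erase w).card := by
      simpa [hK.1] using Finset.pred_card_le_card_erase (s := T.verts) (a := w)
    obtain ⟨s, hsw, hcard⟩ := Finset.exists_subset_card_eq h3
    have hs : s ⊆ T.verts := hsw.trans (Finset.erase_subset w T.verts)
    refine ⟨s, Or.inl ⟨hcard, hs, fun u hu v hv huv => hK.2 u (hs hu) v (hs hv) huv,
      fun v hv => hdeg v (hs hv)⟩, fun hws => (Finset.mem_erase.1 (hsw hws)).1 rfl⟩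
  · obtain ⟨ha, hb⟩ := T.adj_mem hab
    exact ⟨T.verts, Or.inr ⟨a, b, ⟨hK.1, subset_rfl, ha, hb, ne_of_adj hab,
      fun u hu v hv huv _ _ => hK.2 u hu v hv huv, fun v hv _ _ => hdeg v hv⟩,
      fun _ => Or.inl rfl, fun _ => Or.inr rfl⟩⟩

end Complete

structure OreSplit (D1 D2 D : Dgr) (x y z : ℕ) (Z1 Z2 : Set ℕ) : Prop where
  bidirected_right : Bidirected D2
  disjoint : Disjoint D1.verts D2.verts
  x_mem : x ∈ D1.verts
  y_mem : y ∈ D1.verts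
  union_eq : Z1 ∪ Z2 = {w | D2.Adj z w}
  disjoint_parts : Disjoint Z1 Z2
  verts_eq : D.verts = D1.verts ∪ D2.verts.erase z
  adj_iff : ∀ u v, D.Adj u v ↔
      (D1.Adj u v ∧ ¬(u = x ∧ v = y) ∧ ¬(u = y ∧ v = x)) ∨
      (D2.Adj u v ∧ u ≠ z ∧ v ≠ z) ∨
      (u = x ∧ v ∈ Z1 ∧ D2.Adj z v) ∨ (v = x ∧ u ∈ Z1 ∧ D2.Adj u z) ∨
      (u = y ∧ v ∈ Z2 ∧ D2.Adj z v) ∨ (v = y ∧ u ∈ Z2 ∧ D2.Adj u z)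

lemma IsOreComp.exists_oreSplit {D1 D2 D : Dgr} (h : IsOreComp D1 D2 D) :
    ∃ x y z Z1 Z2, D1.Adj x y ∧ OreSplit D1 D2 D x y z Z1 Z2 := by
  obtain ⟨-, hb2, hdisj, x, y, z, Z1, Z2, hx, hy, -, hxy, -, hZ, hZd, -, -, hV, hA⟩ := h
  exact ⟨x, y, z, Z1, Z2, hxy, hb2, hdisj, hx, hy, hZ, hZd, hV, hA⟩

namespace OreSplit

variable {D1 D2 D : Dgr} {x y z : ℕ} {Z1 Z2 : Set ℕ} {a b c : ℕ}

lemma mem_right_of_mem_parts (h : OreSplit D1 D2 D x y z Z1 Z2) (hc : c ∈ Z1 ∨ c ∈ Z2) :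
    c ∈ D2.verts := by
  have hc : c ∈ Z1 ∪ Z2 := hc
  rw [h.union_eq] at hc
  exact (D2.adj_mem hc).2

lemma adj_iff_left (h : OreSplit D1 D2 D x y z Z1 Z2) (hc : c ∈ D1.verts) (hcx : c ≠ x)
    (hcy : c ≠ y) (d : ℕ) : (D1.Adj c d ↔ D.Adj c d) ∧ (D1.Adj d c ↔ D.Adj d c) := by
  have hc2 : c ∉ D2.verts := Finset.disjoint_left.1 h.disjoint hc
  have hc12 : c ∉ Z1 ∧ c ∉ Z2 := ⟨fun h1 => hc2 (h.mem_right_of_mem_parts (Or.inl h1)),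
    fun h2 => hc2 (h.mem_right_of_mem_parts (Or.inr h2))⟩
  have hcd : ¬D2.Adj c d := fun h => hc2 (D2.adj_mem h).1
  have hdc : ¬D2.Adj d c := fun h => hc2 (D2.adj_mem h).2
  rw [h.adj_iff, h.adj_iff]
  tauto

lemma exists_replacement (h : OreSplit D1 D2 D x y z Z1 Z2) (hc : c ∈ D2.verts) (hcz : c ≠ z) :
    ∃ r ∉ D2.verts, ∀ d, (D.Adj c d ↔ D2.Adj c d ∧ d ≠ z ∨ D2.Adj c z ∧ d = r) ∧
      (D.Adj d c ↔ D2.Adj d c ∧ d ≠ z ∨ D2.Adj z c ∧ d = r) := by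
  have hc1 : c ∉ D1.verts := Finset.disjoint_right.1 h.disjoint hc
  have hcx : c ≠ x := fun e => hc1 (e ▸ h.x_mem)
  have hcy : c ≠ y := fun e => hc1 (e ▸ h.y_mem)
  have hcd : ∀ d, ¬D1.Adj c d ∧ ¬D1.Adj d c :=
    fun d => ⟨fun h => hc1 (D1.adj_mem h).1, fun h => hc1 (D1.adj_mem h).2⟩
  have hsymm : D2.Adj c z ↔ D2.Adj z c := ⟨fun e => h.bidirected_right e, fun e => h.bidirected_right e⟩
  have hparts : D2.Adj z c ↔ c ∈ Z1 ∨ c ∈ Z2 := by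
    rw [← Set.mem_union, h.union_eq]; rfl
  by_cases hcZ1 : c ∈ Z1
  · have hcZ2 : c ∉ Z2 := Set.disjoint_left.1 h.disjoint_parts hcZ1
    refine ⟨x, Finset.disjoint_left.1 h.disjoint h.x_mem, fun d => ?_⟩
    rw [h.adj_iff, h.adj_iff]
    have := hcd d
    grind
  · refine ⟨y, Finset.disjoint_left.1 h.disjoint h.y_mem, fun d => ?_⟩
    rw [h.adj_iff, h.adj_iff]
    have := hcd d
    grind

lemma deg_eq_right (h : OreSplit D1 D2 D x y z Z1 Z2) (hc : c ∈ D2.verts) (hcz : c ≠ z) :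
    D.deg c = D2.deg c := by
  obtain ⟨r, hr, hadj⟩ := h.exists_replacement hc hcz
  have hout : {d | D.Adj c d} = {d | d ∈ {e | D2.Adj c e} ∧ d ≠ z ∨ z ∈ {e | D2.Adj c e} ∧ d = r} :=
    Set.ext fun d => (hadj d).1
  have hin : {d | D.Adj d c} = {d | d ∈ {e | D2.Adj e c} ∧ d ≠ z ∨ z ∈ {e | D2.Adj e c} ∧ d = r} :=
    Set.ext fun d => (hadj d).2
  have hfin : ∀ N : Set ℕ, N ⊆ D2.verts → N.Finite := fun N hN => D2.verts.finite_toSet.subset hN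
  rw [deg, deg, hout, hin,
    Set.ncard_setOf_replace (N := {e | D2.Adj c e}) (hfin _ fun d hd => (D2.adj_mem hd).2)
      fun hd => hr (D2.adj_mem hd).2,
    Set.ncard_setOf_replace (N := {e | D2.Adj e c}) (hfin _ fun d hd => (D2.adj_mem hd).1)
      fun hd => hr (D2.adj_mem hd).1]

lemma agreesAt_right (h : OreSplit D1 D2 D x y z Z1 Z2) {s : Finset ℕ} (hzs : z ∉ s)
    (hc : c ∈ D2.verts) (hcz : c ≠ z) : AgreesAt D2 D s c := by
  obtain ⟨r, -, hadj⟩ := h.exists_replacement hc hcz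
  refine ⟨h.deg_eq_right hc hcz, fun d hd => ?_⟩
  have hdz : d ≠ z := fun e => hzs (e ▸ hd)
  exact ⟨fun e => (hadj d).1.2 (Or.inl ⟨e, hdz⟩), fun e => (hadj d).2.2 (Or.inl ⟨e, hdz⟩)⟩

lemma adj_cases (h : OreSplit D1 D2 D x y z Z1 Z2) (hab : D.Adj a b) :
    D1.Adj a b ∨ ((a ∈ D1.verts → a = x ∨ a = y) ∧ (b ∈ D1.verts → b = x ∨ b = y)) := by
  have h2 : ∀ {c}, c ∈ D2.verts → c ∉ D1.verts := fun hc => Finset.disjoint_right.1 h.disjoint hc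
  have hZ : ∀ {c}, c ∈ Z1 ∨ c ∈ Z2 → c ∉ D1.verts := fun hc => h2 (h.mem_right_of_mem_parts hc)
  rcases (h.adj_iff a b).1 hab with ⟨h1, -⟩ | ⟨h22, -⟩ | ⟨rfl, hb, -⟩ | ⟨rfl, ha, -⟩ |
      ⟨rfl, hb, -⟩ | ⟨rfl, ha, -⟩
  · exact Or.inl h1
  · exact Or.inr ⟨fun ha => absurd ha (h2 (D2.adj_mem h22).1),
      fun hb => absurd hb (h2 (D2.adj_mem h22).2)⟩
  · exact Or.inr ⟨fun _ => Or.inl rfl, fun hb' => absurd hb' (hZ (Or.inl hb))⟩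
  · exact Or.inr ⟨fun ha' => absurd ha' (hZ (Or.inl ha)), fun _ => Or.inl rfl⟩
  · exact Or.inr ⟨fun _ => Or.inr rfl, fun hb' => absurd hb' (hZ (Or.inr hb))⟩
  · exact Or.inr ⟨fun ha' => absurd ha' (hZ (Or.inr ha)), fun _ => Or.inr rfl⟩

lemma gemProperty (h : OreSplit D1 D2 D x y z Z1 Z2) (hxy : D1.Adj x y)
    (h1 : D1.GemProperty) (h2 : D2.GemProperty) : D.GemProperty := by
  have hV1 : D1.verts ⊆ D.verts := h.verts_eq ▸ Finset.subset_union_left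
  have hV2 : D2.verts.erase z ⊆ D.verts := h.verts_eq ▸ Finset.subset_union_right
  obtain ⟨t2, ht2, hzt2⟩ := h2.1 z
  obtain ⟨t1, ht1⟩ := h1.2 x y hxy
  have ht2D : D.IsGem t2 := ht2.transfer
    (fun c hc => hV2 (Finset.mem_erase.2 ⟨fun e => hzt2 (e ▸ hc), ht2.subset hc⟩))
    fun c hc => h.agreesAt_right hzt2 (ht2.subset hc) fun e => hzt2 (e ▸ hc)
  have ht1D : D.IsGemFor x y t1 := ht1.transfer (ht1.isGem.subset.trans hV1)
    fun c hc hcx hcy => agreesAt_of_adj_iff (h.adj_iff_left (ht1.isGem.subset hc) hcx hcy · |>.1)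
      (h.adj_iff_left (ht1.isGem.subset hc) hcx hcy · |>.2)
  have hsep : ∀ {c}, c ∈ D1.verts → c ∉ t2 := fun hc hc2 =>
    Finset.disjoint_left.1 h.disjoint hc (ht2.subset hc2)
  refine ⟨fun w => ?_, fun a b hab => ?_⟩
  · by_cases hw : w ∈ t1
    · exact ⟨t2, ht2D, hsep (ht1.isGem.subset hw)⟩
    · exact ⟨t1, ht1D.isGem, hw⟩
  · rcases h.adj_cases hab with hab1 | ⟨ha, hb⟩
    · exact ⟨t2, ht2D.isGemFor (hsep (D1.adj_mem hab1).1) (hsep (D1.adj_mem hab1).2)⟩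
    · exact ⟨t1, ht1D.mono (fun has => ha (ht1.isGem.subset has))
        fun hbs => hb (ht1.isGem.subset hbs)⟩

end OreSplit

end Dgr

theorem IsOre4.gemProperty {T : Dgr} (h : IsOre4 T) : T.GemProperty := by
  induction h with
  | k4 T hK => exact hK.gemProperty
  | comp D1 D2 D _ _ hco ih1 ih2 =>
    obtain ⟨x, y, z, Z1, Z2, hxy, hsplit⟩ := hco.exists_oreSplit
    exact hsplit.gemProperty hxy ih1 ih2

namespace Dgr

variable {D : Dgr} {S : Finset ℕ} {u v c : ℕ}

lemma mem_of_adj_of_notMem_bdry (hc : c ∈ S) (hcb : c ∉ D.bdry S) {d : ℕ}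
    (hcd : D.Adj d c ∨ D.Adj c d) : d ∈ S := by
  by_contra hd
  have hdD : d ∈ D.verts := by
    rcases hcd with h | h
    exacts [(D.adj_mem h).1, (D.adj_mem h).2]
  exact hcb ⟨hc, d, hdD, hd, hcd⟩

lemma agreesAt_addDigon_induce (hc : c ∈ S) (hcb : c ∉ D.bdry S) (hcu : c ≠ u) (hcv : c ≠ v)
    (s : Finset ℕ) : AgreesAt ((D.induce S).addDigon u v) D s c := by
  refine agreesAt_of_adj_iff (fun d => ⟨?_, fun h => ?_⟩) (fun d => ⟨?_, fun h => ?_⟩)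
  · rintro (⟨h, -⟩ | ⟨-, -, -, ⟨rfl, -⟩ | ⟨rfl, -⟩⟩)
    exacts [h, absurd rfl hcu, absurd rfl hcv]
  · exact Or.inl ⟨h, hc, mem_of_adj_of_notMem_bdry hc hcb (Or.inr h)⟩
  · rintro (⟨h, -⟩ | ⟨-, -, -, ⟨-, rfl⟩ | ⟨-, rfl⟩⟩)
    exacts [h, absurd rfl hcv, absurd rfl hcu]
  · exact Or.inl ⟨h, mem_of_adj_of_notMem_bdry hc hcb (Or.inl h), hc⟩

end Dgr

theorem stmt_8_general (D : Dgr) (S : Finset ℕ) (hS : D.OreCollapsible S) :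
    ∃ s : Finset ℕ, (D.IsDiamond s ∨ D.IsEmerald s) ∧ s ⊆ S := by
  obtain ⟨hSD, -, u, v, huv, hbdry, hR⟩ := hS
  have huS : u ∈ S := (hbdry ▸ Set.mem_insert u {v} : u ∈ D.bdry S).1
  have hvS : v ∈ S := (hbdry ▸ Set.mem_insert_of_mem u rfl : v ∈ D.bdry S).1
  have hRuv : ((D.induce S).addDigon u v).Adj u v :=
    Or.inr ⟨huv, Finset.mem_inter.2 ⟨hSD huS, huS⟩, Finset.mem_inter.2 ⟨hSD hvS, hvS⟩,
      Or.inl ⟨rfl, rfl⟩⟩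
  obtain ⟨s, hs⟩ := hR.gemProperty.2 u v hRuv
  have hsR : s ⊆ D.verts ∩ S := hs.isGem.subset
  have hsD : D.IsGemFor u v s := hs.transfer (hsR.trans Finset.inter_subset_left)
    fun c hc hcu hcv => agreesAt_addDigon_induce (Finset.mem_inter.1 (hsR hc)).2
      (by rw [hbdry]; simp [hcu, hcv]) hcu hcv s
  exact ⟨s, hsD.isGem.symm, hsR.trans Finset.inter_subset_right⟩

/-- every Ore-collapsible induced subdigraph of a 4-Ore digraph
contains all the vertices of some diamond or emerald of `D`. -/
theorem stmt_8 (D : Dgr) (h : IsOre4 D) (S : Finset ℕ) (hS : D.OreCollapsible S) :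
    ∃ s : Finset ℕ, (D.IsDiamond s ∨ D.IsEmerald s) ∧ s ⊆ S :=
  stmt_8_general D S hS
end
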